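/- Let n ≥ 1 and k ≥ 1, let z₀ ∈ ℂ, w ∈ ℂ, and let ζ ∈ ℂⁿ be nonzero. Define h : ℂ → ℂⁿ by h(z) = (w / (k! · ‖ζ‖²)) · (z − z₀)^k • ζ. Then: (i) ∂_z̄ h ≡ 0 on ℂ, and more generally every mixed Wirtinger derivative ∂_z^a ∂_z̄^b h with b ≥ 1 vanishes identically; (ii) (∂_z^a h)(z₀) = 0 for every a ≠ k, and (∂_z^k h)(z₀) = (w/‖ζ‖²) • ζ; (iii) consequently, for every finitely supported family of vectors q : ℕ × ℕ → ℂⁿ with q(k,0) = ζ, one has Σ_{(a,b)} ⟪q(a,b), (∂_z^a ∂_z̄^b h)(z₀)⟫ = w. In other words, h solves the constant-coefficient equation Q(∂_z, ∂_z̄) h (z₀) = w for any vector-valued polynomial differential operator Q whose coefficient of ∂_z^k is ζ. -/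

import Mathlib

/-!
A complex-differentiable map has `∂_x f = f'` and `∂_y f = i f'`, so `∂_z f = f'` and
`∂_z̄ f = 0`. Hence `h = c (z - z₀)^k • ζ` is killed by every operator containing a `∂_z̄`,
while `∂_z^a h = c · k(k-1)⋯(k-a+1) (z - z₀)^(k-a) • ζ` vanishes at `z₀` unless `a = k`.
In `Σ ⟪q(a,b), ∂_z^a ∂_z̄^b h(z₀)⟫` only the term `⟪ζ, (w/‖ζ‖²) ζ⟫ = w` survives.
-/

/-- The real directional derivative of `f : ℂ → ℂⁿ` along `1` (the `x`-direction),
with `ℂ` regarded as a 2-dimensional real vector space. -/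
noncomputable def dxDeriv (n : ℕ) (f : ℂ → EuclideanSpace ℂ (Fin n)) :
    ℂ → EuclideanSpace ℂ (Fin n) :=
  fun z => fderiv ℝ f z 1

/-- The real directional derivative of `f : ℂ → ℂⁿ` along `i` (the `y`-direction). -/
noncomputable def dyDeriv (n : ℕ) (f : ℂ → EuclideanSpace ℂ (Fin n)) :
    ℂ → EuclideanSpace ℂ (Fin n) :=
  fun z => fderiv ℝ f z Complex.I

/-- The Wirtinger operator `∂_z = ½(∂_x - i ∂_y)`. -/
noncomputable def wirtingerZ (n : ℕ) (f : ℂ → EuclideanSpace ℂ (Fin n)) :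
    ℂ → EuclideanSpace ℂ (Fin n) :=
  fun z => ((1 : ℂ) / 2) • (dxDeriv n f z - Complex.I • dyDeriv n f z)

/-- The Wirtinger operator `∂_z̄ = ½(∂_x + i ∂_y)`. -/
noncomputable def wirtingerZBar (n : ℕ) (f : ℂ → EuclideanSpace ℂ (Fin n)) :
    ℂ → EuclideanSpace ℂ (Fin n) :=
  fun z => ((1 : ℂ) / 2) • (dxDeriv n f z + Complex.I • dyDeriv n f z)

/-- The mixed Wirtinger derivative `∂_z^a ∂_z̄^b f`. -/
noncomputable def wirtingerMixed (n : ℕ) (a b : ℕ) (f : ℂ → EuclideanSpace ℂ (Fin n)) :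
    ℂ → EuclideanSpace ℂ (Fin n) :=
  (wirtingerZ n)^[a] ((wirtingerZBar n)^[b] f)

open Complex

namespace Wirtinger

variable {n : ℕ} {f : ℂ → EuclideanSpace ℂ (Fin n)} {z : ℂ} {d : EuclideanSpace ℂ (Fin n)}

theorem dxDeriv_of_hasDerivAt (hf : HasDerivAt f d z) : dxDeriv n f z = d := by
  simp [dxDeriv, (hf.hasFDerivAt.restrictScalars ℝ).fderiv]

theorem dyDeriv_of_hasDerivAt (hf : HasDerivAt f d z) : dyDeriv n f z = I • d := by
  simp [dyDeriv, (hf.hasFDerivAt.restrictScalars ℝ).fderiv]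

theorem wirtingerZ_of_hasDerivAt (hf : HasDerivAt f d z) : wirtingerZ n f z = d := by
  rw [wirtingerZ, dxDeriv_of_hasDerivAt hf, dyDeriv_of_hasDerivAt hf, smul_smul, I_mul_I]
  module

theorem wirtingerZBar_of_hasDerivAt (hf : HasDerivAt f d z) : wirtingerZBar n f z = 0 := by
  rw [wirtingerZBar, dxDeriv_of_hasDerivAt hf, dyDeriv_of_hasDerivAt hf, smul_smul, I_mul_I]
  module

theorem wirtingerZBar_eq_zero (hf : Differentiable ℂ f) : wirtingerZBar n f = 0 :=
  funext fun z => wirtingerZBar_of_hasDerivAt (hf z).hasDerivAt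

theorem wirtingerZ_zero : wirtingerZ n 0 = 0 :=
  funext fun z => wirtingerZ_of_hasDerivAt (hasDerivAt_const z 0)

theorem wirtingerMixed_eq_zero_of_differentiable (hf : Differentiable ℂ f) (a : ℕ) {b : ℕ}
    (hb : b ≠ 0) : wirtingerMixed n a b f = 0 := by
  obtain ⟨b, rfl⟩ := Nat.exists_eq_succ_of_ne_zero hb
  have hbar : (wirtingerZBar n)^[b + 1] f = 0 := by
    rw [Function.iterate_succ_apply, wirtingerZBar_eq_zero hf,
      Function.iterate_fixed (wirtingerZBar_eq_zero (differentiable_const 0))]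
  rw [wirtingerMixed, hbar, Function.iterate_fixed wirtingerZ_zero]

variable (n) in
theorem differentiable_smul_pow (c z₀ : ℂ) (m : ℕ) (v : EuclideanSpace ℂ (Fin n)) :
    Differentiable ℂ fun z : ℂ => (c * (z - z₀) ^ m) • v := by
  fun_prop

theorem hasDerivAt_smul_pow (c z₀ : ℂ) (m : ℕ) (v : EuclideanSpace ℂ (Fin n)) (z : ℂ) :
    HasDerivAt (fun z : ℂ => (c * (z - z₀) ^ m) • v) ((c * m * (z - z₀) ^ (m - 1)) • v) z := by
  have hpow := ((hasDerivAt_id z).sub_const z₀).pow m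
  simpa [mul_assoc] using (hpow.const_mul c).smul_const v

theorem iterate_wirtingerZ_smul_pow (c z₀ : ℂ) (m : ℕ) (v : EuclideanSpace ℂ (Fin n)) (a : ℕ) :
    (wirtingerZ n)^[a] (fun z : ℂ => (c * (z - z₀) ^ m) • v)
      = fun z : ℂ => (c * m.descFactorial a * (z - z₀) ^ (m - a)) • v := by
  induction a with
  | zero => simp
  | succ a ih =>
    rw [Function.iterate_succ_apply', ih]
    funext z
    rw [wirtingerZ_of_hasDerivAt (hasDerivAt_smul_pow _ z₀ (m - a) v z), Nat.sub_sub,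
      Nat.descFactorial_succ]
    push_cast
    ring_nf

theorem wirtingerMixed_smul_pow_apply_center (c z₀ : ℂ) (m : ℕ) (v : EuclideanSpace ℂ (Fin n))
    (a : ℕ) : wirtingerMixed n a 0 (fun z : ℂ => (c * (z - z₀) ^ m) • v) z₀
      = if a = m then (c * m.factorial) • v else 0 := by
  rw [wirtingerMixed, Function.iterate_zero_apply, iterate_wirtingerZ_smul_pow]
  rcases lt_trichotomy a m with hlt | rfl | hgt
  · simp [hlt.ne, Nat.sub_ne_zero_of_lt hlt]
  · simp [Nat.descFactorial_self]
  · simp [hgt.ne', Nat.descFactorial_eq_zero_iff_lt.mpr hgt]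

end Wirtinger

open Wirtinger in
theorem stmt1_general (n k : ℕ) (z₀ w : ℂ)
    (ζ : EuclideanSpace ℂ (Fin n)) (hζ : ζ ≠ 0)
    (h : ℂ → EuclideanSpace ℂ (Fin n))
    (hdef : ∀ z : ℂ,
      h z = ((w / ((k.factorial : ℂ) * (‖ζ‖ : ℂ) ^ 2)) * (z - z₀) ^ k) • ζ) :
    (∀ z : ℂ, wirtingerZBar n h z = 0) ∧
    (∀ a b : ℕ, 1 ≤ b → ∀ z : ℂ, wirtingerMixed n a b h z = 0) ∧
    (∀ a : ℕ, a ≠ k → wirtingerMixed n a 0 h z₀ = 0) ∧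
    wirtingerMixed n k 0 h z₀ = (w / (‖ζ‖ : ℂ) ^ 2) • ζ ∧
    (∀ q : ℕ × ℕ →₀ EuclideanSpace ℂ (Fin n), q (k, 0) = ζ →
      (q.sum fun ab v => (inner ℂ v (wirtingerMixed n ab.1 ab.2 h z₀) : ℂ)) = w) := by
  set c := w / ((k.factorial : ℂ) * (‖ζ‖ : ℂ) ^ 2) with hc
  obtain rfl : h = fun z => (c * (z - z₀) ^ k) • ζ := funext hdef
  have hdiff := differentiable_smul_pow n c z₀ k ζ
  have hmixed a b (hb : 1 ≤ b) :=
    wirtingerMixed_eq_zero_of_differentiable hdiff a (Nat.one_le_iff_ne_zero.mp hb)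
  have hpure a (ha : a ≠ k) : wirtingerMixed n a 0 (fun z => (c * (z - z₀) ^ k) • ζ) z₀ = 0 := by
    simp [wirtingerMixed_smul_pow_apply_center, ha]
  have hζ' : (‖ζ‖ : ℂ) ≠ 0 := by simpa using hζ
  have htop :
      wirtingerMixed n k 0 (fun z => (c * (z - z₀) ^ k) • ζ) z₀ = (w / (‖ζ‖ : ℂ) ^ 2) • ζ := by
    have hfact : (k.factorial : ℂ) ≠ 0 := by exact_mod_cast k.factorial_ne_zero
    rw [wirtingerMixed_smul_pow_apply_center, if_pos rfl, hc]
    congr 1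
    field_simp
  refine ⟨congrFun (wirtingerZBar_eq_zero hdiff), fun a b hb => congrFun (hmixed a b hb),
    hpure, htop, fun q hq => ?_⟩
  rw [Finsupp.sum_eq_single (k, 0), hq, htop, inner_smul_right, inner_self_eq_norm_sq_to_K]
  · exact div_mul_cancel₀ w (pow_ne_zero 2 hζ')
  · rintro ⟨a, b⟩ - hab
    rcases Nat.eq_zero_or_pos b with rfl | hb
    · rw [hpure a fun hak => hab (by rw [hak]), inner_zero_right]
    · rw [hmixed a b hb, Pi.zero_apply, inner_zero_right]
  · simp

/-- Full form of the crucial observation: the explicit polynomial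
`h z = (w / (k! ‖ζ‖²)) (z - z₀)^k • ζ` (with `ζ ≠ 0`) is annihilated by `∂_z̄`
(so every mixed Wirtinger derivative with at least one `∂_z̄` vanishes identically),
its pure `∂_z`-derivatives at `z₀` vanish except in order exactly `k`, where the
value is `(w/‖ζ‖²) • ζ`; consequently `h` solves `Q(∂_z, ∂_z̄) h (z₀) = w` for any
vector-valued polynomial differential operator `Q` whose coefficient of `∂_z^k` is `ζ`. -/
theorem stmt1 (n k : ℕ) (hn : 1 ≤ n) (hk : 1 ≤ k) (z₀ w : ℂ)
    (ζ : EuclideanSpace ℂ (Fin n)) (hζ : ζ ≠ 0)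
    (h : ℂ → EuclideanSpace ℂ (Fin n))
    (hdef : ∀ z : ℂ,
      h z = ((w / ((k.factorial : ℂ) * (‖ζ‖ : ℂ) ^ 2)) * (z - z₀) ^ k) • ζ) :
    (∀ z : ℂ, wirtingerZBar n h z = 0) ∧
    (∀ a b : ℕ, 1 ≤ b → ∀ z : ℂ, wirtingerMixed n a b h z = 0) ∧
    (∀ a : ℕ, a ≠ k → wirtingerMixed n a 0 h z₀ = 0) ∧
    wirtingerMixed n k 0 h z₀ = (w / (‖ζ‖ : ℂ) ^ 2) • ζ ∧
    (∀ q : ℕ × ℕ →₀ EuclideanSpace ℂ (Fin n), q (k, 0) = ζ →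
      (q.sum fun ab v => (inner ℂ v (wirtingerMixed n ab.1 ab.2 h z₀) : ℂ)) = w) :=
  stmt1_general n k z₀ w ζ hζ h hdef
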